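/- Let H be a separable complex Hilbert space, T₀ ∈ B(H) a contraction, ℓ²(H) the Hilbert direct sum ⊕_{j=1}^{∞} H, and let U_{T₀} be Schäffer's unitary dilation of T₀ on K := ℓ²(H) ⊕ H ⊕ ℓ²(H). Let B ∈ B(H) be self-adjoint, let A ∈ B(K) be given by A(x, h, y) = (0, Bh, 0), and set U_s := e^{isA} U_{T₀} and T_s := e^{isB} T₀ for s ∈ ℝ. Let Q : K → H, Q(x, h, y) = h, be the coordinate projection onto the middle summand and ι : H → K, ι(h) = (0, h, 0), the corresponding embedding. Then for all s ∈ ℝ and all integers k ≥ 0: Q U_s^k ι = T_s^k and Q (U_s*)^k ι = (T_s*)^k; moreover, for every l ≥ 1, Q ( (d^l/ds^l) U_s^k ) ι = (d^l/ds^l) T_s^k, where the derivatives are taken in the operator norm. -/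

import Mathlib

open ContinuousLinearMap

noncomputable section

/-- `ℓ²(H) = ⊕_{j=1}^∞ H`. -/
abbrev ellTwo (H : Type*) [NormedAddCommGroup H] [InnerProductSpace ℂ H] : Type _ :=
  lp (fun _ : ℕ => H) 2

/-- The dilation space `K = ℓ²(H) ⊕ H ⊕ ℓ²(H)` with its Hilbert (ℓ²-) structure. -/
abbrev SchK (H : Type*) [NormedAddCommGroup H] [InnerProductSpace ℂ H] : Type _ :=
  WithLp 2 (ellTwo H × WithLp 2 (H × ellTwo H))

/-- The element `(x, h, y)` of `K = ℓ²(H) ⊕ H ⊕ ℓ²(H)`. -/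
def SchMk {H : Type*} [NormedAddCommGroup H] [InnerProductSpace ℂ H]
    (x : ellTwo H) (h : H) (y : ellTwo H) : SchK H :=
  (WithLp.equiv 2 (ellTwo H × WithLp 2 (H × ellTwo H))).symm
    (x, (WithLp.equiv 2 (H × ellTwo H)).symm (h, y))


private lemma auxExp {K M : Type*} [NormedAddCommGroup K] [NormedSpace ℂ K] [CompleteSpace K]
    [NormedAddCommGroup M] [NormedSpace ℂ M] [CompleteSpace M]
    (A : K →L[ℂ] K) (B : M →L[ℂ] M) (Q : K →L[ℂ] M) (ι : M →L[ℂ] K)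
    (hQι : ∀ h, Q (ι h) = h) (hA : A = ι.comp (B.comp Q)) (c : ℂ) :
    NormedSpace.exp (c • A) = 1 + ι.comp (((NormedSpace.exp (c • B)) - 1).comp Q) := by
  set Φ : (M →L[ℂ] M) →L[ℂ] (K →L[ℂ] K) :=
    ((ContinuousLinearMap.compL ℂ K M K) ι).comp
      ((ContinuousLinearMap.compL ℂ K M M).flip Q) with hΦdef
  have hΦ : ∀ X : M →L[ℂ] M, Φ X = ι.comp (X.comp Q) := fun X => rfl
  have hΦmul : ∀ X Y : M →L[ℂ] M, Φ X * Φ Y = Φ (X * Y) := by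
    intro X Y
    ext v
    simp [hΦ, ContinuousLinearMap.mul_apply, hQι]
  have h1 : c • A = Φ (c • B) := by
    rw [hA, hΦ]; ext v; simp
  have hpow : ∀ n : ℕ, (c • A) ^ (n + 1) = Φ ((c • B) ^ (n + 1)) := by
    intro n
    induction n with
    | zero => simpa using h1
    | succ n ih => rw [pow_succ, ih, h1, hΦmul, ← pow_succ]
  have hsumA := NormedSpace.expSeries_summable' (𝕂 := ℂ) (c • A)
  have hsumB := NormedSpace.expSeries_summable' (𝕂 := ℂ) (c • B)
  simp only [NormedSpace.exp_eq_tsum (𝕂 := ℂ)]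
  rw [Summable.tsum_eq_zero_add hsumA, Summable.tsum_eq_zero_add hsumB]
  simp only [pow_zero, Nat.factorial_zero, Nat.cast_one, inv_one, one_smul]
  rw [add_sub_cancel_left]
  congr 1
  have hsumB' : Summable (fun n : ℕ => ((↑(n + 1).factorial)⁻¹ : ℂ) • (c • B) ^ (n + 1)) :=
    hsumB.comp_injective (fun a b => by omega)
  rw [← hΦ, ContinuousLinearMap.map_tsum Φ hsumB']
  exact tsum_congr fun n => by rw [hpow, map_smul]

private lemma auxCD {K : Type*} [NormedAddCommGroup K] [NormedSpace ℂ K] [CompleteSpace K]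
    (A U : K →L[ℂ] K) (k : ℕ) :
    ContDiff ℝ (⊤ : ℕ∞) (fun t : ℝ => (NormedSpace.exp (((t : ℂ) * Complex.I) • A) * U) ^ k) := by
  have h1 : (fun t : ℝ => ((t : ℂ) * Complex.I) • A) = fun t : ℝ => t • (Complex.I • A) := by
    funext t
    rw [← smul_smul, Complex.coe_smul]
  have hc : ContDiff ℝ (⊤ : ℕ∞) (fun t : ℝ => ((t : ℂ) * Complex.I) • A) := by
    rw [h1]; exact contDiff_id.smul contDiff_const
  have hexpcd : ContDiff ℂ ⊤ (NormedSpace.exp : (K →L[ℂ] K) → (K →L[ℂ] K)) :=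
    contDiff_iff_contDiffAt.mpr fun x => (NormedSpace.exp_analytic x).contDiffAt
  exact ((((hexpcd.restrict_scalars ℝ).of_le le_top).comp hc).mul contDiff_const).pow k

private lemma auxDeriv {K M : Type*} [NormedAddCommGroup K] [NormedSpace ℂ K] [CompleteSpace K]
    [NormedAddCommGroup M] [NormedSpace ℂ M] [CompleteSpace M]
    (L : (K →L[ℂ] K) →L[ℝ] (M →L[ℂ] M)) (f : ℝ → (K →L[ℂ] K))
    (hf : ContDiff ℝ (⊤ : ℕ∞) f) (l : ℕ) (s : ℝ) :
    iteratedDeriv l (fun t => L (f t)) s = L (iteratedDeriv l f s) := by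
  rw [iteratedDeriv_eq_iteratedFDeriv, iteratedDeriv_eq_iteratedFDeriv]
  rw [show (fun t => L (f t)) = L ∘ f from rfl, L.iteratedFDeriv_comp_left (hf.contDiffAt (x := s)) (by exact_mod_cast (le_top : (l : ℕ∞) ≤ ⊤))]
  simp


private lemma auxAdj {K M : Type*} [NormedAddCommGroup K] [InnerProductSpace ℂ K] [CompleteSpace K]
    [NormedAddCommGroup M] [InnerProductSpace ℂ M] [CompleteSpace M]
    (W : K →L[ℂ] K) (T : M →L[ℂ] M) (Q : K →L[ℂ] M) (ι : M →L[ℂ] K)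
    (hadjι : ContinuousLinearMap.adjoint ι = Q) (k : ℕ)
    (h : Q.comp ((W ^ k).comp ι) = T ^ k) :
    Q.comp ((ContinuousLinearMap.adjoint W ^ k).comp ι) = ContinuousLinearMap.adjoint T ^ k := by
  have hadjQ : ContinuousLinearMap.adjoint Q = ι := by
    rw [← hadjι, ContinuousLinearMap.adjoint_adjoint]
  have h2 := congrArg (ContinuousLinearMap.adjoint) h
  rw [ContinuousLinearMap.adjoint_comp, ContinuousLinearMap.adjoint_comp, hadjι, hadjQ,
    ← ContinuousLinearMap.star_eq_adjoint (W ^ k), star_pow,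
    ← ContinuousLinearMap.star_eq_adjoint (T ^ k), star_pow,
    ContinuousLinearMap.comp_assoc] at h2
  simpa only [ContinuousLinearMap.star_eq_adjoint] using h2

set_option maxHeartbeats 1000000 in
private theorem stmt_16_aux (H : Type*) [NormedAddCommGroup H] [InnerProductSpace ℂ H] [CompleteSpace H]
    [TopologicalSpace.SeparableSpace H]
    (T₀ : H →L[ℂ] H) (hT₀ : ‖T₀‖ ≤ 1)
    (B : H →L[ℂ] H) (hB : IsSelfAdjoint B)
    -- the unilateral shift `S` on `ℓ²(H)`
    (S : ellTwo H →L[ℂ] ellTwo H)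
    (hS : ∀ v : ellTwo H, (S v) 0 = 0 ∧ ∀ n : ℕ, (S v) (n + 1) = v n)
    -- the coordinate map `P : ℓ²(H) → H`, `P(h₁,h₂,…) = h₁`
    (P : ellTwo H →L[ℂ] H) (hP : ∀ v : ellTwo H, P v = v 0)
    -- the embedding `e : H → ℓ²(H)`, `e(h) = (h,0,0,…)`
    (e : H →L[ℂ] ellTwo H)
    (he : ∀ h : H, (e h) 0 = h ∧ ∀ n : ℕ, (e h) (n + 1) = 0)
    -- the defect operators `D_{T₀} = (I − T₀*T₀)^{1/2}` and `D_{T₀*} = (I − T₀T₀*)^{1/2}`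
    (DT : H →L[ℂ] H) (hDT_pos : DT.IsPositive) (hDT_sq : DT * DT = 1 - adjoint T₀ * T₀)
    (DTs : H →L[ℂ] H) (hDTs_pos : DTs.IsPositive) (hDTs_sq : DTs * DTs = 1 - T₀ * adjoint T₀)
    -- Schäffer's unitary dilation `U = U_{T₀}` in block form
    (U : SchK H →L[ℂ] SchK H)
    (hU : ∀ (x : ellTwo H) (h : H) (y : ellTwo H),
      U (SchMk x h y) =
        SchMk (adjoint S x) (DTs (P x) + T₀ h) (-(e (adjoint T₀ (P x))) + e (DT h) + S y))
    -- the ambient self-adjoint operator `A(x,h,y) = (0,Bh,0)`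
    (A : SchK H →L[ℂ] SchK H)
    (hA : ∀ (x : ellTwo H) (h : H) (y : ellTwo H), A (SchMk x h y) = SchMk 0 (B h) 0)
    -- the projection `Q(x,h,y) = h` and embedding `ι(h) = (0,h,0)`
    (Q : SchK H →L[ℂ] H) (hQ : ∀ (x : ellTwo H) (h : H) (y : ellTwo H), Q (SchMk x h y) = h)
    (ι : H →L[ℂ] SchK H) (hι : ∀ h : H, ι h = SchMk 0 h 0)
    -- the paths `U_s = e^{isA} U` and `T_s = e^{isB} T₀`
    (Us : ℝ → (SchK H →L[ℂ] SchK H))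
    (hUs : ∀ s : ℝ, Us s = NormedSpace.exp (((s : ℂ) * Complex.I) • A) * U)
    (Ts : ℝ → (H →L[ℂ] H))
    (hTs : ∀ s : ℝ, Ts s = NormedSpace.exp (((s : ℂ) * Complex.I) • B) * T₀) :
    ∀ s : ℝ, ∀ k : ℕ,
      (Q.comp ((Us s ^ k).comp ι) = Ts s ^ k) ∧
      (Q.comp ((adjoint (Us s) ^ k).comp ι) = adjoint (Ts s) ^ k) ∧
      ∀ l : ℕ, 1 ≤ l →
        Q.comp ((iteratedDeriv l (fun t : ℝ => Us t ^ k) s).comp ι) =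
          iteratedDeriv l (fun t : ℝ => Ts t ^ k) s := by
  -- basic pointwise facts
  have hQι : ∀ h : H, Q (ι h) = h := fun h => by rw [hι, hQ]
  have hadd : ∀ (x x' : ellTwo H) (h h' : H) (y y' : ellTwo H),
      SchMk x h y + SchMk x' h' y' = SchMk (x + x') (h + h') (y + y') := fun _ _ _ _ _ _ => rfl
  -- `A = ι ∘ B ∘ Q`
  have hAeq : A = ι.comp (B.comp Q) := by
    ext v
    refine (hA v.ofLp.1 v.ofLp.2.ofLp.1 v.ofLp.2.ofLp.2).trans ?_
    rw [comp_apply, comp_apply, hι, show Q v = v.ofLp.2.ofLp.1 from hQ v.ofLp.1 v.ofLp.2.ofLp.1 v.ofLp.2.ofLp.2]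
  -- the exponential identity `exp(c•A) = 1 + ι ∘ (exp(c•B) - 1) ∘ Q`
  have hexp : ∀ c : ℂ, NormedSpace.exp (c • A)
      = 1 + ι.comp (((NormedSpace.exp (c • B)) - 1).comp Q) :=
    fun c => auxExp A B Q ι hQι hAeq c
  -- one-step semi-invariance
  have key1 : ∀ (s : ℝ) (h : H) (y : ellTwo H),
      ∃ y', Us s (SchMk 0 h y) = SchMk 0 (Ts s h) y' := by
    intro s h y
    have hU0 : U (SchMk 0 h y) = SchMk 0 (T₀ h) (e (DT h) + S y) := by
      rw [hU 0 h y]; simp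
    refine ⟨e (DT h) + S y, ?_⟩
    rw [hUs s, ContinuousLinearMap.mul_apply, hU0, hexp _, hTs s,
      ContinuousLinearMap.add_apply, ContinuousLinearMap.one_apply, comp_apply, comp_apply,
      show Q (SchMk 0 (T₀ h) (e (DT h) + S y)) = T₀ h from hQ _ _ _, hι, hadd]
    rw [ContinuousLinearMap.sub_apply, ContinuousLinearMap.one_apply,
      ContinuousLinearMap.mul_apply]
    rw [show T₀ h + (NormedSpace.exp (((s : ℂ) * Complex.I) • B) (T₀ h) - T₀ h)
        = NormedSpace.exp (((s : ℂ) * Complex.I) • B) (T₀ h) by abel, add_zero, add_zero]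
  -- iterated semi-invariance
  have key2 : ∀ (s : ℝ) (k : ℕ) (h : H) (y : ellTwo H),
      ∃ y', (Us s ^ k) (SchMk 0 h y) = SchMk 0 ((Ts s ^ k) h) y' := by
    intro s k
    induction k with
    | zero => exact fun h y => ⟨y, by simp⟩
    | succ k ih =>
      intro h y
      obtain ⟨y1, hy1⟩ := key1 s h y
      obtain ⟨y2, hy2⟩ := ih (Ts s h) y1
      refine ⟨y2, ?_⟩
      rw [pow_succ, ContinuousLinearMap.mul_apply, hy1, hy2, pow_succ,
        ContinuousLinearMap.mul_apply]
  -- Part 1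
  have part1 : ∀ (s : ℝ) (k : ℕ), Q.comp ((Us s ^ k).comp ι) = Ts s ^ k := by
    intro s k
    ext h
    obtain ⟨y', hy⟩ := key2 s k h 0
    simp only [comp_apply]
    rw [hι, hy, hQ]
  -- adjoints of the embedding and projection
  have hadjι : adjoint ι = Q := by
    symm
    rw [eq_adjoint_iff]
    intro v h
    have hv : v = SchMk v.ofLp.1 v.ofLp.2.ofLp.1 v.ofLp.2.ofLp.2 := rfl
    rw [hv, hQ, hι]
    show (inner ℂ v.ofLp.2.ofLp.1 h : ℂ)
      = inner ℂ v.ofLp.1 (0 : ellTwo H) + (inner ℂ v.ofLp.2.ofLp.1 h + inner ℂ v.ofLp.2.ofLp.2 (0 : ellTwo H))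
    simp
  -- Part 2
  have part2 : ∀ (s : ℝ) (k : ℕ),
      Q.comp ((adjoint (Us s) ^ k).comp ι) = adjoint (Ts s) ^ k :=
    fun s k => auxAdj (Us s) (Ts s) Q ι hadjι k (part1 s k)
  -- Part 3 : smoothness of `t ↦ Us t ^ k`
  have hf : ∀ k : ℕ, ContDiff ℝ (⊤ : ℕ∞) (fun t : ℝ => Us t ^ k) := by
    intro k
    simp only [hUs]
    exact auxCD A U k
  intro s k
  refine ⟨part1 s k, part2 s k, ?_⟩
  intro l _
  -- the compression as a continuous linear map on operators
  set L : (SchK H →L[ℂ] SchK H) →L[ℝ] (H →L[ℂ] H) :=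
    (((compL ℂ H (SchK H) H) Q).comp ((compL ℂ H (SchK H) (SchK H)).flip ι)).restrictScalars ℝ
    with hLdef
  have hL : ∀ W : SchK H →L[ℂ] SchK H, L W = Q.comp (W.comp ι) := fun _ => rfl
  have hkey : iteratedDeriv l (fun t : ℝ => L (Us t ^ k)) s
      = L (iteratedDeriv l (fun t : ℝ => Us t ^ k) s) :=
    auxDeriv L (fun t : ℝ => Us t ^ k) (hf k) l s
  rw [← hL, ← hkey]
  congr 1
  funext t
  rw [hL, part1 t k]


/-- Schäffer's unitary dilation intertwines powers, adjoint powers, and derivatives of powers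
of the paths `U_s = e^{isA} U_{T₀}` and `T_s = e^{isB} T₀` through the compression
`Q (·) ι` to the middle summand. -/
theorem stmt_16 (H : Type*) [NormedAddCommGroup H] [InnerProductSpace ℂ H] [CompleteSpace H]
    [TopologicalSpace.SeparableSpace H]
    (T₀ : H →L[ℂ] H) (hT₀ : ‖T₀‖ ≤ 1)
    (B : H →L[ℂ] H) (hB : IsSelfAdjoint B)
    -- the unilateral shift `S` on `ℓ²(H)`
    (S : ellTwo H →L[ℂ] ellTwo H)
    (hS : ∀ v : ellTwo H, (S v) 0 = 0 ∧ ∀ n : ℕ, (S v) (n + 1) = v n)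
    -- the coordinate map `P : ℓ²(H) → H`, `P(h₁,h₂,…) = h₁`
    (P : ellTwo H →L[ℂ] H) (hP : ∀ v : ellTwo H, P v = v 0)
    -- the embedding `e : H → ℓ²(H)`, `e(h) = (h,0,0,…)`
    (e : H →L[ℂ] ellTwo H)
    (he : ∀ h : H, (e h) 0 = h ∧ ∀ n : ℕ, (e h) (n + 1) = 0)
    -- the defect operators `D_{T₀} = (I − T₀*T₀)^{1/2}` and `D_{T₀*} = (I − T₀T₀*)^{1/2}`
    (DT : H →L[ℂ] H) (hDT_pos : DT.IsPositive) (hDT_sq : DT * DT = 1 - adjoint T₀ * T₀)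
    (DTs : H →L[ℂ] H) (hDTs_pos : DTs.IsPositive) (hDTs_sq : DTs * DTs = 1 - T₀ * adjoint T₀)
    -- Schäffer's unitary dilation `U = U_{T₀}` in block form
    (U : SchK H →L[ℂ] SchK H)
    (hU : ∀ (x : ellTwo H) (h : H) (y : ellTwo H),
      U (SchMk x h y) =
        SchMk (adjoint S x) (DTs (P x) + T₀ h) (-(e (adjoint T₀ (P x))) + e (DT h) + S y))
    -- the ambient self-adjoint operator `A(x,h,y) = (0,Bh,0)`
    (A : SchK H →L[ℂ] SchK H)
    (hA : ∀ (x : ellTwo H) (h : H) (y : ellTwo H), A (SchMk x h y) = SchMk 0 (B h) 0)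
    -- the projection `Q(x,h,y) = h` and embedding `ι(h) = (0,h,0)`
    (Q : SchK H →L[ℂ] H) (hQ : ∀ (x : ellTwo H) (h : H) (y : ellTwo H), Q (SchMk x h y) = h)
    (ι : H →L[ℂ] SchK H) (hι : ∀ h : H, ι h = SchMk 0 h 0)
    -- the paths `U_s = e^{isA} U` and `T_s = e^{isB} T₀`
    (Us : ℝ → (SchK H →L[ℂ] SchK H))
    (hUs : ∀ s : ℝ, Us s = NormedSpace.exp (((s : ℂ) * Complex.I) • A) * U)
    (Ts : ℝ → (H →L[ℂ] H))
    (hTs : ∀ s : ℝ, Ts s = NormedSpace.exp (((s : ℂ) * Complex.I) • B) * T₀) :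
    ∀ s : ℝ, ∀ k : ℕ,
      (Q.comp ((Us s ^ k).comp ι) = Ts s ^ k) ∧
      (Q.comp ((adjoint (Us s) ^ k).comp ι) = adjoint (Ts s) ^ k) ∧
      ∀ l : ℕ, 1 ≤ l →
        Q.comp ((iteratedDeriv l (fun t : ℝ => Us t ^ k) s).comp ι) =
          iteratedDeriv l (fun t : ℝ => Ts t ^ k) s :=
  stmt_16_aux H T₀ hT₀ B hB S hS P hP e he DT hDT_pos hDT_sq DTs hDTs_pos hDTs_sq U hU A hA Q hQ ι hι Us hUs Ts hTs

end
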